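/- Let T be a finite rooted tree with N ≥ 1 nodes. Let E denote the set of leaves of T, let V₁ denote the set of internal nodes of T having exactly one child, and let 𝔠 denote the number of connected components of the subgraph of T induced by V₁ (the number of maximal chains of consecutive nodes of out-degree one). Then 4|E| + 2|V₁| − 2𝔠 ≥ N + 2. -/
import Mathlib


/-- A finite rooted tree: a root node together with the list of subtrees of its children. -/
inductive RTree : Type where
  | node : List RTree → RTree

namespace RTree

mutual
  /-- The number of nodes of a rooted tree. -/
  def size : RTree → ℕ
    | .node ts => 1 + sizeList ts
  /-- The total number of nodes of a list of rooted trees. -/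
  def sizeList : List RTree → ℕ
    | [] => 0
    | t :: ts => size t + sizeList ts
end

mutual
  /-- The number of leaves (nodes with no children) of a rooted tree. -/
  def leaves : RTree → ℕ
    | .node [] => 1
    | .node (t :: ts) => leavesList (t :: ts)
  /-- The total number of leaves of a list of rooted trees. -/
  def leavesList : List RTree → ℕ
    | [] => 0
    | t :: ts => leaves t + leavesList ts
end

/-- Whether the root of the tree has exactly one child (out-degree one). -/
def degOne : RTree → Bool
  | .node ts => ts.length == 1

mutual
  /-- The number of nodes having exactly one child. -/
  def v1 : RTree → ℕ
    | .node ts => (if ts.length = 1 then 1 else 0) + v1List ts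
  def v1List : List RTree → ℕ
    | [] => 0
    | t :: ts => v1 t + v1List ts
end

mutual
  /-- The number of edges of the tree both of whose endpoints have exactly one child;
  these are exactly the edges of the subgraph induced by the out-degree-one nodes. -/
  def v1Edges : RTree → ℕ
    | .node ts =>
      (match ts with
        | [t] => if degOne t then 1 else 0
        | _ => 0) + v1EdgesList ts
  def v1EdgesList : List RTree → ℕ
    | [] => 0
    | t :: ts => v1Edges t + v1EdgesList ts
end

/-- The number of connected components of the subgraph induced by the out-degree-one
nodes (the number of maximal chains): since this subgraph is a forest, it equals the
number of its vertices minus the number of its edges. -/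
def chains (T : RTree) : ℕ := T.v1 - T.v1Edges

end RTree

namespace RTree

mutual
theorem edges_le : ∀ T : RTree, v1Edges T ≤ v1 T
  | .node [] => by
      simp [v1Edges, v1, v1EdgesList, v1List]
  | .node [t] => by
      have h := edges_le t
      simp only [v1Edges, v1, v1EdgesList, v1List]
      norm_num
      split <;> omega
  | .node (t :: t' :: ts) => by
      have h1 := edges_le t
      have h2 := edges_le t'
      have h3 := edgesList_le ts
      simp only [v1Edges, v1, v1EdgesList, v1List, List.length_cons]
      omega
theorem edgesList_le : ∀ ts : List RTree, v1EdgesList ts ≤ v1List ts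
  | [] => le_refl _
  | t :: ts => by
      rw [v1EdgesList, v1List]
      exact Nat.add_le_add (edges_le t) (edgesList_le ts)
end

mutual
theorem main_ineq : ∀ T : RTree,
    (T.size : ℤ) + (if degOne T then 2 else 3) ≤ 4 * T.leaves + 2 * T.v1Edges
  | .node [] => by
      simp [size, sizeList, leaves, v1Edges, v1EdgesList, degOne]
  | .node [t] => by
      have h := main_ineq t
      simp only [size, sizeList, leaves, leavesList, v1Edges, v1EdgesList,
        if_pos (show RTree.degOne (.node [t]) = true by rfl)]
      by_cases hd : degOne t = true
      · rw [if_pos hd] at h ⊢; push_cast at h ⊢; omega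
      · rw [if_neg hd] at h ⊢; push_cast at h ⊢; omega
  | .node (t :: t' :: ts) => by
      have h1 := main_ineq t
      have h2 := main_ineq t'
      have h3 := mainList_ineq ts
      have hw1 : (t.size : ℤ) + 2 ≤ 4 * t.leaves + 2 * t.v1Edges := by
        split at h1 <;> omega
      have hw2 : (t'.size : ℤ) + 2 ≤ 4 * t'.leaves + 2 * t'.v1Edges := by
        split at h2 <;> omega
      simp only [size, sizeList, leaves, leavesList, v1Edges, v1EdgesList, degOne,
        List.length_cons]
      push_cast
      omega
theorem mainList_ineq : ∀ ts : List RTree,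
    (sizeList ts : ℤ) + 2 * ts.length ≤ 4 * leavesList ts + 2 * v1EdgesList ts
  | [] => by rw [sizeList, leavesList, v1EdgesList]; simp
  | t :: ts => by
      have h1 := main_ineq t
      have hw : (t.size : ℤ) + 2 ≤ 4 * t.leaves + 2 * t.v1Edges := by
        split at h1 <;> omega
      have h2 := mainList_ineq ts
      rw [sizeList, leavesList, v1EdgesList]
      simp only [List.length_cons]
      push_cast
      omega
end

end RTree

theorem tree_node_counting_with_chains (T : RTree) (hN : 1 ≤ T.size) :
    (4 * T.leaves : ℤ) + 2 * T.v1 - 2 * T.chains ≥ T.size + 2 := by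
  have hle := RTree.edges_le T
  have h := RTree.main_ineq T
  have hw : (T.size : ℤ) + 2 ≤ 4 * T.leaves + 2 * T.v1Edges := by
    split at h <;> omega
  have hc : (T.chains : ℤ) = T.v1 - T.v1Edges := by
    rw [RTree.chains]; push_cast [hle]; ring
  rw [hc]
  omega
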